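/- arXiv:1306.3191 — 4 statements merged into one kernel-verified Lean document; each statement's English description precedes it below -/
import Mathlib

section
/- Under the hypotheses of Theorem 3.2 (range condition and step-size condition of Algorithm 3.1), let (x̄, p̄, q̄, ȳ) be the primal-dual solution to which the sequences generated by Algorithm 3.1 converge weakly. If in addition C is uniformly monotone at x̄, i.e. there exists an increasing function φ : [0,+∞) → [0,+∞] vanishing only at 0 such that ⟨x − x̄, Cx − Cx̄⟩ ≥ φ(‖x − x̄‖) for all x ∈ H, then x_n → x̄ strongly in H as n → +∞. -/
open scoped RealInnerProductSpace ENNReal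
open Filter Topology

noncomputable section

def MonoOp {E : Type*} [NormedAddCommGroup E] [InnerProductSpace ℝ E] (A : E → Set E) : Prop :=
  ∀ ⦃x y u v : E⦄, u ∈ A x → v ∈ A y → (0:ℝ) ≤ ⟪x - y, u - v⟫

def MaxMonoOp {E : Type*} [NormedAddCommGroup E] [InnerProductSpace ℝ E] (A : E → Set E) : Prop :=
  MonoOp A ∧ ∀ B : E → Set E, MonoOp B → (∀ x, A x ⊆ B x) → B = A

def invOp {E : Type*} (A : E → Set E) : E → Set E := fun u => {x | u ∈ A x}

def sumOp {E : Type*} [Add E] (A B : E → Set E) : E → Set E :=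
  fun x => {s | ∃ u ∈ A x, ∃ v ∈ B x, s = u + v}

/-- parallel sum `A □ B = (A⁻¹ + B⁻¹)⁻¹` -/
def parOp {E : Type*} [Add E] (A B : E → Set E) : E → Set E :=
  invOp (sumOp (invOp A) (invOp B))

/-- `T* ∘ B ∘ T` -/
def compOp {F G : Type*} [NormedAddCommGroup F] [InnerProductSpace ℝ F] [CompleteSpace F]
    [NormedAddCommGroup G] [InnerProductSpace ℝ G] [CompleteSpace G]
    (T : F →L[ℝ] G) (B : G → Set G) : F → Set F :=
  fun x => (ContinuousLinearMap.adjoint T) '' (B (T x))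

def smulOp {E : Type*} [SMul ℝ E] (γ : ℝ) (A : E → Set E) : E → Set E :=
  fun x => (γ • ·) '' A x

/-- `x = J_{γ A}(w)`, i.e. `w ∈ x + γ A x`. -/
def IsRes {E : Type*} [AddCommGroup E] [Module ℝ E] (γ : ℝ) (A : E → Set E) (w x : E) : Prop :=
  w - x ∈ smulOp γ A x

/-- weak convergence in a Hilbert space -/
def WConv {E : Type*} [NormedAddCommGroup E] [InnerProductSpace ℝ E] (u : ℕ → E) (l : E) : Prop :=
  ∀ w : E, Tendsto (fun n => ⟪u n, w⟫) atTop (𝓝 ⟪l, w⟫)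

/-!
Algorithm 3.1 is a relaxed, inexact forward–backward iteration on the primal–dual space
`H × ∏ Xᵢ × ∏ Yᵢ × ∏ Gᵢ × ∏ Gᵢ × ∏ Gᵢ`, taken in the metric of the operator `V`
(`metricForm`), which the step-size condition makes coercive in the `x`-component with constant
`(1 - α) / τ`. Monotonicity of `A`, `Bᵢ⁻¹`, `Dᵢ⁻¹` at an exact step against the primal–dual
solution `s`, together with the cocoercivity of `C`, gives the descent
`‖ξ̃ - s‖²_V ≤ ‖ξ - s‖²_V - (2/μ - τ/(1 - α)) ‖C x - C x̄‖²`. With summable errors this keeps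
`‖ξₙ - s‖_V` bounded and makes `∑ ‖C xₙ - C x̄‖²` finite. Hence `xₙ` is bounded and
`C xₙ → C x̄`, so `⟪xₙ - x̄, C xₙ - C x̄⟫ → 0`, and uniform monotonicity of `C` at `x̄` forces
`xₙ → x̄`.
-/

theorem two_mul_mul_le_of_sqrt_le {θ γ c α u w : ℝ} (hθ : 0 < θ) (hγ : 0 < γ) (hc : 0 ≤ c)
    (h : √(θ * γ * c ^ 2) ≤ α) : 2 * (c * u * w) ≤ α * (θ⁻¹ * w ^ 2 + γ⁻¹ * u ^ 2) := by
  have hsqrt : √(θ * γ * c ^ 2) = √θ * √γ * c := by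
    rw [Real.sqrt_mul (by positivity), Real.sqrt_mul hθ.le, Real.sqrt_sq hc]
  have hθ' : 0 < √θ := Real.sqrt_pos.2 hθ
  have hγ' : 0 < √γ := Real.sqrt_pos.2 hγ
  have amgm := two_mul_le_add_sq (u / √γ) (w / √θ)
  rw [div_pow, div_pow, Real.sq_sqrt hθ.le, Real.sq_sqrt hγ.le] at amgm
  have hscale : 2 * (c * u * w) = √θ * √γ * c * (2 * (u / √γ) * (w / √θ)) := by
    field_simp
  have hnonneg : 0 ≤ u ^ 2 / γ + w ^ 2 / θ := by positivity
  rw [hscale]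
  calc √θ * √γ * c * (2 * (u / √γ) * (w / √θ)) ≤ √θ * √γ * c * (u ^ 2 / γ + w ^ 2 / θ) :=
        mul_le_mul_of_nonneg_left amgm (by positivity)
    _ ≤ α * (u ^ 2 / γ + w ^ 2 / θ) := mul_le_mul_of_nonneg_right (hsqrt ▸ h) hnonneg
    _ = α * (θ⁻¹ * w ^ 2 + γ⁻¹ * u ^ 2) := by ring

theorem pos_and_sub_inv_pos_of_one_lt_mul {c β : ℝ} (hc : 0 < c) (h : 1 < c * β) :
    0 < β ∧ 0 < c - β⁻¹ := by
  have hβ : 0 < β := pos_of_mul_pos_right (one_pos.trans h) hc.le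
  refine ⟨hβ, ?_⟩
  have hrw : c - β⁻¹ = (c * β - 1) / β := by field_simp
  rw [hrw]
  exact div_pos (by linarith) hβ

theorem le_add_tsum_of_le_add {s η : ℕ → ℝ} (hη : Summable η) (hη0 : ∀ n, 0 ≤ η n)
    (h : ∀ n, s (n + 1) ≤ s n + η n) (n : ℕ) : s n ≤ s 0 + ∑' k, η k := by
  have partial_sum : s n ≤ s 0 + ∑ k ∈ Finset.range n, η k := by
    induction n with
    | zero => simp
    | succ n ih => rw [Finset.sum_range_succ]; linarith [h n]
  linarith [hη.sum_le_tsum (Finset.range n) fun k _ => hη0 k]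

theorem summable_of_le_sub_add {a c δ : ℕ → ℝ} (ha : ∀ n, 0 ≤ a n) (hc : ∀ n, 0 ≤ c n)
    (hδ : Summable δ) (hδ0 : ∀ n, 0 ≤ δ n) (h : ∀ n, a (n + 1) ≤ a n - c n + δ n) :
    Summable c := by
  refine summable_of_sum_range_le hc (c := a 0 + ∑' k, δ k) fun N => ?_
  have telescope : ∑ k ∈ Finset.range N, c k + a N ≤ a 0 + ∑ k ∈ Finset.range N, δ k := by
    induction N with
    | zero => simp
    | succ N ih => simp only [Finset.sum_range_succ]; linarith [h N]
  linarith [ha N, hδ.sum_le_tsum (Finset.range N) fun k _ => hδ0 k]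

/-- A scalar form of quasi-Fejér monotonicity with a sufficient decrease `c`. -/
theorem bddAbove_and_summable_of_sqrt_le {a c η : ℕ → ℝ} (hc : ∀ n, 0 ≤ c n)
    (hca : ∀ n, c n ≤ a n) (hη : Summable η) (hη0 : ∀ n, 0 ≤ η n)
    (h : ∀ n, √(a (n + 1)) ≤ √(a n - c n) + η n) :
    BddAbove (Set.range a) ∧ Summable c := by
  set R := √(a 0) + ∑' k, η k
  set T := ∑' k, η k
  have hT : ∀ n, η n ≤ T := fun n => hη.le_tsum n fun k _ => hη0 k
  have hdrop : ∀ n, √(a n - c n) ≤ √(a n) := fun n => Real.sqrt_le_sqrt (by linarith [hc n])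
  have hR : ∀ n, √(a n) ≤ R :=
    le_add_tsum_of_le_add (s := fun n => √(a n)) hη hη0 fun n => (h n).trans (by linarith [hdrop n])
  have ha : ∀ n, 0 ≤ a n := fun n => (hc n).trans (hca n)
  refine ⟨⟨R ^ 2, ?_⟩, summable_of_le_sub_add ha hc (hη.mul_left (2 * R + T))
    (fun n => mul_nonneg (by linarith [Real.sqrt_nonneg (a 0), hR n, hη0 n, hT n]) (hη0 n))
    fun n => ?_⟩
  · rintro _ ⟨n, rfl⟩
    rw [← Real.sq_sqrt (ha n)]
    exact pow_le_pow_left₀ (Real.sqrt_nonneg _) (hR n) 2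
  · have hsq : a (n + 1) ≤ (√(a n - c n) + η n) ^ 2 := by
      rw [← Real.sq_sqrt (ha (n + 1))]
      exact pow_le_pow_left₀ (Real.sqrt_nonneg _) (h n) 2
    have hcn : √(a n - c n) ^ 2 = a n - c n := Real.sq_sqrt (by linarith [hca n])
    nlinarith [hdrop n, hR n, hT n, hη0 n, Real.sqrt_nonneg (a n - c n)]

theorem tendsto_zero_of_monotoneOn_of_tendsto_zero {ι : Type*} {l : Filter ι} {φ : ℝ → ℝ≥0∞}
    (hφ : MonotoneOn φ (Set.Ici 0)) (hφ0 : ∀ t, 0 ≤ t → φ t = 0 → t = 0) {d : ι → ℝ}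
    (hd : ∀ i, 0 ≤ d i) (h : Tendsto (fun i => φ (d i)) l (𝓝 0)) : Tendsto d l (𝓝 0) := by
  refine tendsto_order.2 ⟨fun b hb => Eventually.of_forall fun i => hb.trans_le (hd i),
    fun δ hδ => ?_⟩
  have hφδ : 0 < φ δ := pos_iff_ne_zero.2 fun h0 => hδ.ne' (hφ0 δ hδ.le h0)
  filter_upwards [h.eventually_lt_const hφδ] with i hi
  by_contra! hle
  exact (hφ (Set.mem_Ici.2 hδ.le) (Set.mem_Ici.2 (hd i)) hle).not_gt hi

/-- The paper's `aₙ ≈ bₙ`. -/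
def Approx {E : Type*} [SeminormedAddCommGroup E] (a b : ℕ → E) : Prop :=
  Summable fun n => ‖a n - b n‖

namespace Approx

variable {E F : Type*} [SeminormedAddCommGroup E] [SeminormedAddCommGroup F]
  {a a' b b' c : ℕ → E}

theorem refl (a : ℕ → E) : Approx a a := by
  simp [Approx, summable_zero]

theorem trans (h₁ : Approx a b) (h₂ : Approx b c) : Approx a c :=
  .of_nonneg_of_le (fun _ => norm_nonneg _)
    (fun _ => norm_sub_le_norm_sub_add_norm_sub _ _ _) (Summable.add h₁ h₂)

theorem add (h : Approx a a') (h' : Approx b b') :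
    Approx (fun n => a n + b n) (fun n => a' n + b' n) :=
  .of_nonneg_of_le (fun _ => norm_nonneg _)
    (fun _ => by rw [add_sub_add_comm]; exact norm_add_le _ _) (Summable.add h h')

theorem sub (h : Approx a a') (h' : Approx b b') :
    Approx (fun n => a n - b n) (fun n => a' n - b' n) :=
  .of_nonneg_of_le (fun _ => norm_nonneg _)
    (fun _ => by rw [sub_sub_sub_comm]; exact norm_sub_le _ _) (Summable.add h h')

theorem const_smul [NormedSpace ℝ E] (r : ℝ) (h : Approx a b) :
    Approx (fun n => r • a n) (fun n => r • b n) :=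
  (Summable.mul_left ‖r‖ h).congr fun _ => by rw [← smul_sub, norm_smul]

theorem map [NormedSpace ℝ E] [NormedSpace ℝ F] (T : E →L[ℝ] F) (h : Approx a b) :
    Approx (fun n => T (a n)) (fun n => T (b n)) :=
  .of_nonneg_of_le (fun _ => norm_nonneg _)
    (fun _ => by rw [← map_sub]; exact T.le_opNorm _) (Summable.mul_left ‖T‖ h)

theorem prodMk {u u' : ℕ → F} (h : Approx a a') (h' : Approx u u') :
    Approx (fun n => (a n, u n)) (fun n => (a' n, u' n)) :=
  .of_nonneg_of_le (fun _ => norm_nonneg _)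
    (fun _ => norm_prod_le_iff.2
      ⟨le_add_of_le_of_nonneg le_rfl (norm_nonneg _),
        le_add_of_nonneg_of_le (norm_nonneg _) le_rfl⟩) (Summable.add h h')

theorem pi {ι : Type*} [Fintype ι] {V : ι → Type*} [∀ i, SeminormedAddCommGroup (V i)]
    {f g : ℕ → ∀ i, V i} (h : ∀ i, Approx (fun n => f n i) (fun n => g n i)) : Approx f g :=
  .of_nonneg_of_le (fun _ => norm_nonneg _)
    (fun n => (pi_norm_le_iff_of_nonneg (Finset.sum_nonneg fun _ _ => norm_nonneg _)).2
      fun i => Finset.single_le_sum (f := fun i => ‖f n i - g n i‖)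
        (fun _ _ => norm_nonneg _) (Finset.mem_univ i))
    (summable_sum fun i _ => h i)

end Approx

theorem ContinuousLinearMap.abs_inner_apply_le {E F : Type*} [NormedAddCommGroup E]
    [NormedSpace ℝ E] [NormedAddCommGroup F] [InnerProductSpace ℝ F] (T : E →L[ℝ] F) (u : E)
    (w : F) : |⟪T u, w⟫| ≤ ‖T‖ * ‖u‖ * ‖w‖ :=
  (abs_real_inner_le_norm _ _).trans (mul_le_mul_of_nonneg_right (T.le_opNorm u) (norm_nonneg w))

theorem ContinuousLinearMap.two_mul_abs_inner_apply_le {E F : Type*} [NormedAddCommGroup E]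
    [NormedSpace ℝ E] [NormedAddCommGroup F] [InnerProductSpace ℝ F] {θ γ α : ℝ} (hθ : 0 < θ)
    (hγ : 0 < γ) (T : E →L[ℝ] F) (hα : √(θ * γ * ‖T‖ ^ 2) ≤ α) (u : E) (w : F) :
    2 * |⟪T u, w⟫| ≤ α * (θ⁻¹ * ‖w‖ ^ 2 + γ⁻¹ * ‖u‖ ^ 2) :=
  (mul_le_mul_of_nonneg_left (T.abs_inner_apply_le u w) zero_le_two).trans
    (two_mul_mul_le_of_sqrt_le hθ hγ (norm_nonneg T) hα)

theorem two_mul_sum_inner_le {ι H : Type*} [Fintype ι] [NormedAddCommGroup H]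
    [InnerProductSpace ℝ H] {G : ι → Type*} [∀ i, NormedAddCommGroup (G i)]
    [∀ i, InnerProductSpace ℝ (G i)] (L : ∀ i, H →L[ℝ] G i) {τ α : ℝ} {σ : ι → ℝ} (hτ : 0 < τ)
    (hσ : ∀ i, 0 < σ i) (hα : √(τ * ∑ i, σ i * ‖L i‖ ^ 2) ≤ α) (x : H) (v : ∀ i, G i) :
    2 * ∑ i, ⟪L i x, v i⟫ ≤ α * (τ⁻¹ * ‖x‖ ^ 2 + ∑ i, (σ i)⁻¹ * ‖v i‖ ^ 2) := by
  set W := √(∑ i, (σ i)⁻¹ * ‖v i‖ ^ 2)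
  have hW : W ^ 2 = ∑ i, (σ i)⁻¹ * ‖v i‖ ^ 2 :=
    Real.sq_sqrt (Finset.sum_nonneg fun i _ => by have := hσ i; positivity)
  have cauchy_schwarz : ∑ i, ‖L i‖ * ‖v i‖ ≤ √(∑ i, σ i * ‖L i‖ ^ 2) * W := by
    have h := Real.sum_mul_le_sqrt_mul_sqrt Finset.univ (fun i => √(σ i) * ‖L i‖)
      (fun i => ‖v i‖ / √(σ i))
    have hprod : ∀ i, √(σ i) * ‖L i‖ * (‖v i‖ / √(σ i)) = ‖L i‖ * ‖v i‖ := fun i => by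
      have := Real.sqrt_pos.2 (hσ i); field_simp
    have hf : ∀ i, (√(σ i) * ‖L i‖) ^ 2 = σ i * ‖L i‖ ^ 2 := fun i => by
      rw [mul_pow, Real.sq_sqrt (hσ i).le]
    have hg : ∀ i, (‖v i‖ / √(σ i)) ^ 2 = (σ i)⁻¹ * ‖v i‖ ^ 2 := fun i => by
      rw [div_pow, Real.sq_sqrt (hσ i).le, inv_mul_eq_div]
    simpa only [hprod, hf, hg] using h
  have hinner : ∑ i, ⟪L i x, v i⟫ ≤ (∑ i, ‖L i‖ * ‖v i‖) * ‖x‖ := by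
    rw [Finset.sum_mul]
    refine Finset.sum_le_sum fun i _ => ?_
    have := (le_abs_self _).trans ((L i).abs_inner_apply_le x (v i))
    linarith
  have hα' : √(τ * 1 * √(∑ i, σ i * ‖L i‖ ^ 2) ^ 2) ≤ α := by
    rwa [mul_one, Real.sq_sqrt (Finset.sum_nonneg fun i _ => by have := hσ i; positivity)]
  have amgm := two_mul_mul_le_of_sqrt_le (u := W) (w := ‖x‖) hτ one_pos (Real.sqrt_nonneg _) hα'
  rw [inv_one, one_mul, hW] at amgm
  nlinarith [mul_le_mul_of_nonneg_right cauchy_schwarz (norm_nonneg x)]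

theorem MonoOp.invOp {E : Type*} [NormedAddCommGroup E] [InnerProductSpace ℝ E]
    {A : E → Set E} (h : MonoOp A) : MonoOp (invOp A) :=
  fun _ _ _ _ hu hv => by rw [real_inner_comm]; exact h hu hv

theorem IsRes.inv_smul_sub_mem {E : Type*} [AddCommGroup E] [Module ℝ E] {γ : ℝ} (hγ : γ ≠ 0)
    {A : E → Set E} {w x : E} (h : IsRes γ A w x) : γ⁻¹ • (w - x) ∈ A x := by
  obtain ⟨s, hs, hsw⟩ := h
  rwa [← hsw, inv_smul_smul₀ hγ]

theorem tendsto_of_uniformlyMonotoneAt {H : Type*} [NormedAddCommGroup H] [InnerProductSpace ℝ H]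
    {C : H → H} {xb : H} {φ : ℝ → ℝ≥0∞} (hφ : MonotoneOn φ (Set.Ici 0))
    (hφ0 : ∀ t, 0 ≤ t → φ t = 0 → t = 0)
    (hC : ∀ w, φ ‖w - xb‖ ≤ ENNReal.ofReal ⟪w - xb, C w - C xb⟫) {x : ℕ → H}
    (hbdd : BddAbove (Set.range fun n => ‖x n - xb‖))
    (hCx : Tendsto (fun n => ‖C (x n) - C xb‖) atTop (𝓝 0)) : Tendsto x atTop (𝓝 xb) := by
  rw [tendsto_iff_norm_sub_tendsto_zero]
  refine tendsto_zero_of_monotoneOn_of_tendsto_zero hφ hφ0 (fun n => norm_nonneg _) ?_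
  have hprod : Tendsto (fun n => ‖x n - xb‖ * ‖C (x n) - C xb‖) atTop (𝓝 0) :=
    isBoundedUnder_le_mul_tendsto_zero
      (by simpa [Function.comp_def] using hbdd.isBoundedUnder_of_range) hCx
  have hofReal := ENNReal.tendsto_ofReal hprod
  rw [ENNReal.ofReal_zero] at hofReal
  exact tendsto_of_tendsto_of_tendsto_of_le_of_le tendsto_const_nhds hofReal (fun _ => zero_le)
    fun n => (hC (x n)).trans (ENNReal.ofReal_le_ofReal (real_inner_le_norm _ _))

namespace ContinuousLinearMap

variable {E : Type*} [SeminormedAddCommGroup E] [NormedSpace ℝ E] (B : E →L[ℝ] E →L[ℝ] ℝ)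

theorem sqrt_apply_add_self_le (hpos : ∀ a, 0 ≤ B a a) (hsymm : ∀ a b, B a b = B b a)
    (a b : E) : √(B (a + b) (a + b)) ≤ √(B a a) + √(B b b) := by
  have cauchy_schwarz : B a b ≤ √(B a a) * √(B b b) := by
    rw [← Real.sqrt_mul (hpos a)]
    refine Real.le_sqrt_of_sq_le ?_
    have := LinearMap.BilinForm.apply_mul_apply_le_of_forall_zero_le B.toLinearMap₁₂ hpos a b
    simp only [toLinearMap₁₂_apply_apply_apply] at this
    rw [hsymm b a] at this
    rwa [sq]
  rw [Real.sqrt_le_left (by positivity), add_sq, Real.sq_sqrt (hpos a), Real.sq_sqrt (hpos b)]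
  simp only [map_add, add_apply]
  rw [hsymm b a]
  linarith

theorem apply_self_eq_sub (hsymm : ∀ a b, B a b = B b a) (u w : E) :
    B w w = B u u - B (u - w) (u - w) - 2 * B (u - w) w := by
  simp only [map_sub, sub_apply]
  rw [hsymm w u]
  ring

theorem apply_self_add_smul_sub (hsymm : ∀ a b, B a b = B b a) (u w : E) (t : ℝ) :
    B (u + t • (w - u)) (u + t • (w - u))
      = (1 - t) * B u u + t * B w w - t * (1 - t) * B (u - w) (u - w) := by
  simp only [map_add, map_sub, map_smul, add_apply, sub_apply, smul_apply, smul_eq_mul]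
  rw [hsymm w u]
  ring

theorem apply_self_le_opNorm (a : E) : B a a ≤ ‖B‖ * ‖a‖ ^ 2 := by
  rw [sq, ← mul_assoc]
  exact (le_abs_self _).trans (B.le_opNorm₂ a a)

theorem apply_add_smul_sub_le (hpos : ∀ a, 0 ≤ B a a) (hsymm : ∀ a b, B a b = B b a)
    {u w s : E} {d t : ℝ} (ht0 : 0 ≤ t) (ht1 : t ≤ 1)
    (h : B (w - s) (w - s) ≤ B (u - s) (u - s) - d) :
    B (u + t • (w - u) - s) (u + t • (w - u) - s) ≤ B (u - s) (u - s) - t * d := by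
  have hrw : u + t • (w - u) - s = (u - s) + t • ((w - s) - (u - s)) := by module
  rw [hrw, B.apply_self_add_smul_sub hsymm, sub_sub_sub_cancel_right]
  nlinarith [mul_nonneg (mul_nonneg ht0 (sub_nonneg.2 ht1)) (hpos (u - w))]

theorem bddAbove_and_summable_of_quasiFejer (hpos : ∀ a, 0 ≤ B a a)
    (hsymm : ∀ a b, B a b = B b a) {s : E} {ξ ξ' e : ℕ → E} {c : ℕ → ℝ} (hc : ∀ n, 0 ≤ c n)
    (hstep : ∀ n, ξ (n + 1) = ξ' n + e n) (he : Summable fun n => ‖e n‖)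
    (hdesc : ∀ n, B (ξ' n - s) (ξ' n - s) ≤ B (ξ n - s) (ξ n - s) - c n) :
    BddAbove (Set.range fun n => B (ξ n - s) (ξ n - s)) ∧ Summable c := by
  refine bddAbove_and_summable_of_sqrt_le hc (fun n => by linarith [hdesc n, hpos (ξ' n - s)])
    (he.mul_left √‖B‖) (fun n => by positivity) fun n => ?_
  have herr : √(B (e n) (e n)) ≤ √‖B‖ * ‖e n‖ := by
    rw [← Real.sqrt_sq (norm_nonneg (e n)), ← Real.sqrt_mul (norm_nonneg B)]
    exact Real.sqrt_le_sqrt (B.apply_self_le_opNorm (e n))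
  calc √(B (ξ (n + 1) - s) (ξ (n + 1) - s))
      = √(B ((ξ' n - s) + e n) ((ξ' n - s) + e n)) := by rw [hstep n, add_sub_right_comm]
    _ ≤ √(B (ξ' n - s) (ξ' n - s)) + √(B (e n) (e n)) := B.sqrt_apply_add_self_le hpos hsymm _ _
    _ ≤ _ := add_le_add (Real.sqrt_le_sqrt (hdesc n)) herr

end ContinuousLinearMap

/-- `hkey` is what monotonicity gives at an exact forward–backward step `u ↦ w` in the metric `B`;
cocoercivity of the forward part turns it into a descent. -/
theorem ContinuousLinearMap.apply_sub_self_le_of_cocoercive {H F : Type*} [NormedAddCommGroup H]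
    [InnerProductSpace ℝ H] [SeminormedAddCommGroup F] [NormedSpace ℝ F]
    (B : H × F →L[ℝ] H × F →L[ℝ] ℝ) (hsymm : ∀ a b, B a b = B b a) {β μ : ℝ} (hβ : 0 < β)
    (hlow : ∀ a, β * ‖a.1‖ ^ 2 ≤ B a a) {u w s : H × F} {g : H}
    (hkey : ⟪w.1 - s.1, g⟫ ≤ B (u - w) (w - s)) (hco : μ⁻¹ * ‖g‖ ^ 2 ≤ ⟪u.1 - s.1, g⟫) :
    B (w - s) (w - s) ≤ B (u - s) (u - s) - (2 * μ⁻¹ - β⁻¹) * ‖g‖ ^ 2 := by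
  have hsplit := B.apply_self_eq_sub hsymm (u - s) (w - s)
  rw [sub_sub_sub_cancel_right] at hsplit
  have hinner : ⟪w.1 - s.1, g⟫ = ⟪u.1 - s.1, g⟫ - ⟪(u - w).1, g⟫ := by
    rw [Prod.fst_sub, ← inner_sub_left, sub_sub_sub_cancel_left]
  set t := ‖(u - w).1‖
  have amgm : 2 * (t * ‖g‖) ≤ β * t ^ 2 + β⁻¹ * ‖g‖ ^ 2 := by
    have hsq : β⁻¹ * (β * t - ‖g‖) ^ 2 = β * t ^ 2 - 2 * (t * ‖g‖) + β⁻¹ * ‖g‖ ^ 2 := by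
      field_simp; ring
    linarith [mul_nonneg (inv_nonneg.2 hβ.le) (sq_nonneg (β * t - ‖g‖))]
  linarith [hlow (u - w), real_inner_le_norm (u - w).1 g]

/-- A relaxed inexact forward–backward iteration in the metric `B`: `ξe n` is the exact step from
`ξ n` and `ξt n` the computed one. -/
theorem ContinuousLinearMap.bddAbove_and_tendsto_of_forwardBackward {H F : Type*}
    [NormedAddCommGroup H] [InnerProductSpace ℝ H] [SeminormedAddCommGroup F] [NormedSpace ℝ F]
    (B : H × F →L[ℝ] H × F →L[ℝ] ℝ) (hsymm : ∀ a b, B a b = B b a) {β μ ε : ℝ} (hβ : 0 < β)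
    (hlow : ∀ a, β * ‖a.1‖ ^ 2 ≤ B a a) (hκ : 0 < 2 * μ⁻¹ - β⁻¹) (hε : 0 < ε)
    {C : H → H} {s : H × F} (hC : ∀ w, μ⁻¹ * ‖C w - C s.1‖ ^ 2 ≤ ⟪w - s.1, C w - C s.1⟫)
    {ξ ξe ξt : ℕ → H × F} {lam : ℕ → ℝ} (hlam : ∀ n, lam n ∈ Set.Icc ε 1)
    (hkey : ∀ n, ⟪(ξe n).1 - s.1, C (ξ n).1 - C s.1⟫ ≤ B (ξ n - ξe n) (ξe n - s))
    (hupd : ∀ n, ξ (n + 1) = ξ n + lam n • (ξt n - ξ n)) (herr : Approx ξt ξe) :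
    BddAbove (Set.range fun n => ‖(ξ n).1 - s.1‖) ∧
      Tendsto (fun n => ‖C (ξ n).1 - C s.1‖) atTop (𝓝 0) := by
  have hpos : ∀ a, 0 ≤ B a a := fun a => (mul_nonneg hβ.le (sq_nonneg _)).trans (hlow a)
  set κ := 2 * μ⁻¹ - β⁻¹
  set g := fun n => ‖C (ξ n).1 - C s.1‖
  have hdesc : ∀ n, B (ξ n + lam n • (ξe n - ξ n) - s) (ξ n + lam n • (ξe n - ξ n) - s)
      ≤ B (ξ n - s) (ξ n - s) - ε * κ * g n ^ 2 := by
    intro n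
    have hexact := B.apply_sub_self_le_of_cocoercive hsymm hβ hlow (hkey n) (hC _)
    have hrelax := B.apply_add_smul_sub_le hpos hsymm (hε.le.trans (hlam n).1) (hlam n).2 hexact
    nlinarith [(hlam n).1, mul_nonneg hκ.le (sq_nonneg (g n))]
  have hstep : ∀ n, ξ (n + 1) = (ξ n + lam n • (ξe n - ξ n)) + lam n • (ξt n - ξe n) :=
    fun n => by rw [hupd n]; module
  have herr' : Summable fun n => ‖lam n • (ξt n - ξe n)‖ := by
    refine .of_nonneg_of_le (fun _ => norm_nonneg _) (fun n => ?_) herr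
    rw [norm_smul, Real.norm_of_nonneg (hε.le.trans (hlam n).1)]
    exact mul_le_of_le_one_left (norm_nonneg _) (hlam n).2
  obtain ⟨⟨R, hR⟩, hsum⟩ := B.bddAbove_and_summable_of_quasiFejer hpos hsymm
    (c := fun n => ε * κ * g n ^ 2) (fun n => by positivity) hstep herr' hdesc
  refine ⟨⟨√(R / β), ?_⟩, ?_⟩
  · rintro _ ⟨n, rfl⟩
    refine Real.le_sqrt_of_sq_le ?_
    rw [le_div_iff₀ hβ, mul_comm]
    exact (Prod.fst_sub (ξ n) s ▸ hlow (ξ n - s)).trans (hR ⟨n, rfl⟩)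
  · have hεκ : ε * κ ≠ 0 := by positivity
    have hsq : Tendsto (fun n => √((ε * κ)⁻¹ * (ε * κ * g n ^ 2))) atTop (𝓝 0) := by
      simpa using ((hsum.tendsto_atTop_zero).const_mul (ε * κ)⁻¹).sqrt
    refine hsq.congr fun n => ?_
    rw [inv_mul_cancel_left₀ hεκ, Real.sqrt_sq (norm_nonneg _)]

/-- Algorithm 3.1 computes `z̃, ỹ` in closed form from `u₁, u₂`; they solve the implicit system in
which `ṽ` depends on `z̃, ỹ`. -/
theorem closedForm_zy_solves {E : Type*} [AddCommGroup E] [Module ℝ E] {σ γ1 γ2 : ℝ}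
    (hσ : 0 ≤ σ) (hγ1 : 0 ≤ γ1) (hγ2 : 0 ≤ γ2) (zz y v a b w : E) :
    let u1 := zz + γ1 • (a + v + σ • w)
    let u2 := y + γ2 • (b + v + σ • w)
    let z' := ((1 + σ * γ2) / (1 + σ * (γ1 + γ2))) • (u1 - (σ * γ1 / (1 + σ * γ2)) • u2)
    let y' := (1 / (1 + σ * γ2)) • (u2 - (σ * γ2) • z')
    let v' := v + σ • (w - z' - y')
    z' = zz + γ1 • (a + v') ∧ y' = y + γ2 • (b + v') := by
  intro u1 u2 z' y' v'
  have h2 : 1 + σ * γ2 ≠ 0 := by positivity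
  have h12 : 1 + σ * (γ1 + γ2) ≠ 0 := by positivity
  constructor <;> (simp only [u1, u2, z', y', v']; match_scalars <;> field_simp <;> ring)

section PrimalDual

variable {m : ℕ} {H : Type*} [NormedAddCommGroup H] [InnerProductSpace ℝ H]
  {G X Y : Fin m → Type*} [∀ i, NormedAddCommGroup (G i)] [∀ i, InnerProductSpace ℝ (G i)]
  [∀ i, NormedAddCommGroup (X i)] [∀ i, InnerProductSpace ℝ (X i)]
  [∀ i, NormedAddCommGroup (Y i)] [∀ i, InnerProductSpace ℝ (Y i)]

variable (H G X Y) in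
/-- Points `(x, p, q, z, y, v)` of the primal–dual space of Algorithm 3.1. -/
abbrev PDSpace := H × (∀ i, X i) × (∀ i, Y i) × (∀ i, G i) × (∀ i, G i) × (∀ i, G i)

open ContinuousLinearMap in
/-- The form `⟪V ·, ·⟫` of the paper's metric operator
`V (x, p, q, z, y, v) = (x/τ - ∑ L*v, p/θ₁ + K z, q/θ₂ + M y, z/γ₁ + K*p, y/γ₂ + M*q, v/σ - L x)`,
in which Algorithm 3.1 is a forward–backward iteration. -/
def metricForm (τ : ℝ) (θ1 θ2 γ1 γ2 σ : Fin m → ℝ) (L : ∀ i, H →L[ℝ] G i)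
    (K : ∀ i, G i →L[ℝ] X i) (M : ∀ i, G i →L[ℝ] Y i) :
    PDSpace H G X Y →L[ℝ] PDSpace H G X Y →L[ℝ] ℝ :=
  let πx : PDSpace H G X Y →L[ℝ] H := fst ℝ _ _
  let πp (i : Fin m) : PDSpace H G X Y →L[ℝ] X i := proj i ∘L fst ℝ _ _ ∘L snd ℝ _ _
  let πq (i : Fin m) : PDSpace H G X Y →L[ℝ] Y i :=
    proj i ∘L fst ℝ _ _ ∘L snd ℝ _ _ ∘L snd ℝ _ _
  let πz (i : Fin m) : PDSpace H G X Y →L[ℝ] G i :=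
    proj i ∘L fst ℝ _ _ ∘L snd ℝ _ _ ∘L snd ℝ _ _ ∘L snd ℝ _ _
  let πy (i : Fin m) : PDSpace H G X Y →L[ℝ] G i :=
    proj i ∘L fst ℝ _ _ ∘L snd ℝ _ _ ∘L snd ℝ _ _ ∘L snd ℝ _ _ ∘L snd ℝ _ _
  let πv (i : Fin m) : PDSpace H G X Y →L[ℝ] G i :=
    proj i ∘L snd ℝ _ _ ∘L snd ℝ _ _ ∘L snd ℝ _ _ ∘L snd ℝ _ _ ∘L snd ℝ _ _
  τ⁻¹ • (innerSL ℝ).bilinearComp πx πx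
    + ∑ i, ((θ1 i)⁻¹ • (innerSL ℝ).bilinearComp (πp i) (πp i)
      + (θ2 i)⁻¹ • (innerSL ℝ).bilinearComp (πq i) (πq i)
      + (γ1 i)⁻¹ • (innerSL ℝ).bilinearComp (πz i) (πz i)
      + (γ2 i)⁻¹ • (innerSL ℝ).bilinearComp (πy i) (πy i)
      + (σ i)⁻¹ • (innerSL ℝ).bilinearComp (πv i) (πv i)
      - (innerSL ℝ).bilinearComp (L i ∘L πx) (πv i)
      - (innerSL ℝ).bilinearComp (πv i) (L i ∘L πx)
      + (innerSL ℝ).bilinearComp (K i ∘L πz i) (πp i)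
      + (innerSL ℝ).bilinearComp (πp i) (K i ∘L πz i)
      + (innerSL ℝ).bilinearComp (M i ∘L πy i) (πq i)
      + (innerSL ℝ).bilinearComp (πq i) (M i ∘L πy i))

variable (τ : ℝ) (θ1 θ2 γ1 γ2 σ : Fin m → ℝ) (L : ∀ i, H →L[ℝ] G i)
  (K : ∀ i, G i →L[ℝ] X i) (M : ∀ i, G i →L[ℝ] Y i)

theorem metricForm_apply (x x' : H) (p p' : ∀ i, X i) (q q' : ∀ i, Y i)
    (z z' y y' v v' : ∀ i, G i) :
    metricForm τ θ1 θ2 γ1 γ2 σ L K M (x, p, q, z, y, v) (x', p', q', z', y', v')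
      = τ⁻¹ * ⟪x, x'⟫ + ∑ i, ((θ1 i)⁻¹ * ⟪p i, p' i⟫ + (θ2 i)⁻¹ * ⟪q i, q' i⟫
        + (γ1 i)⁻¹ * ⟪z i, z' i⟫ + (γ2 i)⁻¹ * ⟪y i, y' i⟫ + (σ i)⁻¹ * ⟪v i, v' i⟫
        - ⟪L i x, v' i⟫ - ⟪v i, L i x'⟫ + ⟪K i (z i), p' i⟫ + ⟪p i, K i (z' i)⟫
        + ⟪M i (y i), q' i⟫ + ⟪q i, M i (y' i)⟫) := by
  simp [metricForm]

theorem metricForm_symm (a b : PDSpace H G X Y) :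
    metricForm τ θ1 θ2 γ1 γ2 σ L K M a b = metricForm τ θ1 θ2 γ1 γ2 σ L K M b a := by
  obtain ⟨x, p, q, z, y, v⟩ := a
  obtain ⟨x', p', q', z', y', v'⟩ := b
  simp only [metricForm_apply, real_inner_comm x x']
  congr 1
  refine Finset.sum_congr rfl fun i _ => ?_
  simp only [real_inner_comm]
  ring

theorem metricForm_self_ge {α : ℝ} (hτ : 0 < τ) (hθ1 : ∀ i, 0 < θ1 i) (hθ2 : ∀ i, 0 < θ2 i)
    (hγ1 : ∀ i, 0 < γ1 i) (hγ2 : ∀ i, 0 < γ2 i) (hσ : ∀ i, 0 < σ i) (hα1 : α ≤ 1)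
    (hαL : √(τ * ∑ i, σ i * ‖L i‖ ^ 2) ≤ α) (hαK : ∀ i, √(θ1 i * γ1 i * ‖K i‖ ^ 2) ≤ α)
    (hαM : ∀ i, √(θ2 i * γ2 i * ‖M i‖ ^ 2) ≤ α) (a : PDSpace H G X Y) :
    (1 - α) * τ⁻¹ * ‖a.1‖ ^ 2 ≤ metricForm τ θ1 θ2 γ1 γ2 σ L K M a a := by
  obtain ⟨x, p, q, z, y, v⟩ := a
  have hcoupling : ∀ i, (σ i)⁻¹ * ‖v i‖ ^ 2 - 2 * ⟪L i x, v i⟫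
      ≤ (θ1 i)⁻¹ * ‖p i‖ ^ 2 + (θ2 i)⁻¹ * ‖q i‖ ^ 2 + (γ1 i)⁻¹ * ‖z i‖ ^ 2
        + (γ2 i)⁻¹ * ‖y i‖ ^ 2 + (σ i)⁻¹ * ‖v i‖ ^ 2 - ⟪L i x, v i⟫ - ⟪v i, L i x⟫
        + ⟪K i (z i), p i⟫ + ⟪p i, K i (z i)⟫ + ⟪M i (y i), q i⟫ + ⟪q i, M i (y i)⟫ := by
    intro i
    have hdiag : 0 ≤ (1 - α) * ((θ1 i)⁻¹ * ‖p i‖ ^ 2 + (γ1 i)⁻¹ * ‖z i‖ ^ 2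
        + ((θ2 i)⁻¹ * ‖q i‖ ^ 2 + (γ2 i)⁻¹ * ‖y i‖ ^ 2)) := by
      have := hθ1 i; have := hθ2 i; have := hγ1 i; have := hγ2 i
      exact mul_nonneg (by linarith) (by positivity)
    rw [real_inner_comm (L i x), real_inner_comm (K i (z i)), real_inner_comm (M i (y i))]
    linarith [neg_abs_le ⟪K i (z i), p i⟫, neg_abs_le ⟪M i (y i), q i⟫,
      (K i).two_mul_abs_inner_apply_le (hθ1 i) (hγ1 i) (hαK i) (z i) (p i),
      (M i).two_mul_abs_inner_apply_le (hθ2 i) (hγ2 i) (hαM i) (y i) (q i)]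
  have hsum := Finset.sum_le_sum fun i (_ : i ∈ Finset.univ) => hcoupling i
  rw [Finset.sum_sub_distrib, ← Finset.mul_sum] at hsum
  have hv : 0 ≤ (1 - α) * ∑ i, (σ i)⁻¹ * ‖v i‖ ^ 2 :=
    mul_nonneg (by linarith) (Finset.sum_nonneg fun i _ => by have := hσ i; positivity)
  simp only [metricForm_apply, real_inner_self_eq_norm_sq]
  linarith [two_mul_sum_inner_le L hτ hσ hαL x v]

end PrimalDual

section Algorithm

open ContinuousLinearMap

variable {m : ℕ} {H : Type*} [NormedAddCommGroup H] [InnerProductSpace ℝ H]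
  {G X Y : Fin m → Type*} [∀ i, NormedAddCommGroup (G i)] [∀ i, InnerProductSpace ℝ (G i)]
  [∀ i, CompleteSpace (G i)] [∀ i, NormedAddCommGroup (X i)] [∀ i, InnerProductSpace ℝ (X i)]
  [∀ i, CompleteSpace (X i)] [∀ i, NormedAddCommGroup (Y i)] [∀ i, InnerProductSpace ℝ (Y i)]
  [∀ i, CompleteSpace (Y i)]
  (τ : ℝ) (θ1 θ2 γ1 γ2 σ : Fin m → ℝ) (L : ∀ i, H →L[ℝ] G i) (K : ∀ i, G i →L[ℝ] X i)
  (M : ∀ i, G i →L[ℝ] Y i) (A : H → Set H) (B : ∀ i, X i → Set (X i))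
  (D : ∀ i, Y i → Set (Y i)) (C : H → H) (z : H) (r : ∀ i, G i)

/-- The error-free update of Algorithm 3.1 from `ξ`, given the resolvent values `x', p', q'`. -/
def exactStep : PDSpace H G X Y → H → (∀ i, X i) → (∀ i, Y i) → PDSpace H G X Y
  | (x, p, q, zz, y, v), x', p', q' =>
    let w i := L i ((2:ℝ) • x' - x) - r i
    let u1 i := zz i + γ1 i • (adjoint (K i) (p i - (2:ℝ) • p' i) + v i + σ i • w i)
    let u2 i := y i + γ2 i • (adjoint (M i) (q i - (2:ℝ) • q' i) + v i + σ i • w i)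
    let z' i := ((1 + σ i * γ2 i) / (1 + σ i * (γ1 i + γ2 i))) •
      (u1 i - (σ i * γ1 i / (1 + σ i * γ2 i)) • u2 i)
    let y' i := (1 / (1 + σ i * γ2 i)) • (u2 i - (σ i * γ2 i) • z' i)
    (x', p', q', z', y', fun i => v i + σ i • (w i - z' i - y' i))

theorem approx_exactStep {x xt jx : ℕ → H} {p pt jp : ℕ → ∀ i, X i} {q qt jq : ℕ → ∀ i, Y i}
    {zz zt y yt v vt u1 u2 : ℕ → ∀ i, G i} (hxt : Approx xt jx)
    (hpt : ∀ i, Approx (fun n => pt n i) (fun n => jp n i))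
    (hqt : ∀ i, Approx (fun n => qt n i) (fun n => jq n i))
    (hu1 : ∀ i, Approx (fun n => u1 n i) fun n => zz n i + γ1 i •
        (adjoint (K i) (p n i - (2:ℝ) • pt n i) + v n i +
          σ i • (L i ((2:ℝ) • xt n - x n) - r i)))
    (hu2 : ∀ i, Approx (fun n => u2 n i) fun n => y n i + γ2 i •
        (adjoint (M i) (q n i - (2:ℝ) • qt n i) + v n i +
          σ i • (L i ((2:ℝ) • xt n - x n) - r i)))
    (hzt : ∀ i, Approx (fun n => zt n i) fun n =>
        ((1 + σ i * γ2 i) / (1 + σ i * (γ1 i + γ2 i))) •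
          (u1 n i - (σ i * γ1 i / (1 + σ i * γ2 i)) • u2 n i))
    (hyt : ∀ i, Approx (fun n => yt n i) fun n =>
        (1 / (1 + σ i * γ2 i)) • (u2 n i - (σ i * γ2 i) • zt n i))
    (hvt : ∀ i, Approx (fun n => vt n i) fun n =>
        v n i + σ i • (L i ((2:ℝ) • xt n - x n) - r i - zt n i - yt n i)) :
    Approx (fun n => (xt n, pt n, qt n, zt n, yt n, vt n))
      fun n => exactStep γ1 γ2 σ L K M r (x n, p n, q n, zz n, y n, v n) (jx n) (jp n) (jq n) := by
  have hw i := (((hxt.const_smul 2).sub (.refl x)).map (L i)).sub (.refl fun _ => r i)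
  have hU1 i := (hu1 i).trans <| (Approx.refl _).add <| Approx.const_smul _ <|
    ((((Approx.refl _).sub ((hpt i).const_smul 2)).map _).add (.refl _)).add ((hw i).const_smul _)
  have hU2 i := (hu2 i).trans <| (Approx.refl _).add <| Approx.const_smul _ <|
    ((((Approx.refl _).sub ((hqt i).const_smul 2)).map _).add (.refl _)).add ((hw i).const_smul _)
  have hZ i := (hzt i).trans <| ((hU1 i).sub ((hU2 i).const_smul _)).const_smul _
  have hY i := (hyt i).trans <| ((hU2 i).sub ((hZ i).const_smul _)).const_smul _
  have hV i := (hvt i).trans <| (Approx.refl _).add <| (((hw i).sub (hZ i)).sub (hY i)).const_smul _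
  exact hxt.prodMk <| (Approx.pi hpt).prodMk <| (Approx.pi hqt).prodMk <|
    (Approx.pi hZ).prodMk <| (Approx.pi hY).prodMk (Approx.pi hV)

variable [CompleteSpace H]

theorem metricForm_apply_eq_inner (x x' : H) (p p' : ∀ i, X i) (q q' : ∀ i, Y i)
    (z z' y y' v v' : ∀ i, G i) :
    metricForm τ θ1 θ2 γ1 γ2 σ L K M (x, p, q, z, y, v) (x', p', q', z', y', v')
      = ⟪x', τ⁻¹ • x - ∑ i, adjoint (L i) (v i + v' i)⟫
        + ∑ i, (⟪p' i, (θ1 i)⁻¹ • p i + K i (z i + z' i)⟫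
          + ⟪q' i, (θ2 i)⁻¹ • q i + M i (y i + y' i)⟫
          + ⟪z' i, (γ1 i)⁻¹ • z i + adjoint (K i) (p i - p' i) + v' i⟫
          + ⟪y' i, (γ2 i)⁻¹ • y i + adjoint (M i) (q i - q' i) + v' i⟫
          + ⟪v' i, (σ i)⁻¹ • v i - L i (x - x') - z' i - y' i⟫) := by
  rw [metricForm_apply, inner_sub_right, inner_sum, real_inner_smul_right, real_inner_comm x,
    sub_add_eq_add_sub, add_sub_assoc, ← Finset.sum_sub_distrib]
  congr 1
  refine Finset.sum_congr rfl fun i _ => ?_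
  simp only [map_add, map_sub, inner_add_right, inner_sub_right, real_inner_smul_right,
    adjoint_inner_right]
  simp only [real_inner_comm]
  ring

/-- `ξ'` is the error-free update of Algorithm 3.1 from `ξ`, with `z̃, ỹ, ṽ` given by the
linear system that the algorithm's explicit formulas solve. -/
def IsExactStep : PDSpace H G X Y → PDSpace H G X Y → Prop
  | (x, p, q, zz, y, v), (x', p', q', z', y', v') =>
    IsRes τ A (x - τ • (C x + ∑ i, adjoint (L i) (v i) - z)) x' ∧
    (∀ i, IsRes (θ1 i) (invOp (B i)) (p i + θ1 i • K i (zz i)) (p' i)) ∧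
    (∀ i, IsRes (θ2 i) (invOp (D i)) (q i + θ2 i • M i (y i)) (q' i)) ∧
    (∀ i, z' i = zz i + γ1 i • (adjoint (K i) (p i - (2:ℝ) • p' i) + v' i)) ∧
    (∀ i, y' i = y i + γ2 i • (adjoint (M i) (q i - (2:ℝ) • q' i) + v' i)) ∧
    ∀ i, v' i = v i + σ i • (L i ((2:ℝ) • x' - x) - r i - z' i - y' i)

theorem isExactStep_exactStep (hγ1 : ∀ i, 0 < γ1 i) (hγ2 : ∀ i, 0 < γ2 i) (hσ : ∀ i, 0 < σ i)
    {x x' : H} {p p' : ∀ i, X i} {q q' : ∀ i, Y i} {zz y v : ∀ i, G i}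
    (hx' : IsRes τ A (x - τ • (C x + ∑ i, adjoint (L i) (v i) - z)) x')
    (hp' : ∀ i, IsRes (θ1 i) (invOp (B i)) (p i + θ1 i • K i (zz i)) (p' i))
    (hq' : ∀ i, IsRes (θ2 i) (invOp (D i)) (q i + θ2 i • M i (y i)) (q' i)) :
    IsExactStep τ θ1 θ2 γ1 γ2 σ L K M A B D C z r (x, p, q, zz, y, v)
      (exactStep γ1 γ2 σ L K M r (x, p, q, zz, y, v) x' p' q') :=
  ⟨hx', hp', hq',
    fun i => (closedForm_zy_solves (hσ i).le (hγ1 i).le (hγ2 i).le _ _ _ _ _ _).1,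
    fun i => (closedForm_zy_solves (hσ i).le (hγ1 i).le (hγ2 i).le _ _ _ _ _ _).2,
    fun _ => rfl⟩

/-- At an exact step, the `z`, `y` and `v` brackets of `metricForm_apply_eq_inner` vanish: the
solution is a fixed point of the same linear system. -/
theorem metricForm_sub_eq_of_isExactStep (hγ1 : ∀ i, 0 < γ1 i) (hγ2 : ∀ i, 0 < γ2 i)
    (hσ : ∀ i, 0 < σ i) {xb : H} {pb : ∀ i, X i} {qb : ∀ i, Y i} {yb : ∀ i, G i}
    (hKM : ∀ i, adjoint (K i) (pb i) = adjoint (M i) (qb i)) {x x' : H} {p p' : ∀ i, X i}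
    {q q' : ∀ i, Y i} {zz z' y y' v v' : ∀ i, G i}
    (hξ : IsExactStep τ θ1 θ2 γ1 γ2 σ L K M A B D C z r (x, p, q, zz, y, v)
      (x', p', q', z', y', v')) :
    metricForm τ θ1 θ2 γ1 γ2 σ L K M ((x, p, q, zz, y, v) - (x', p', q', z', y', v'))
      ((x', p', q', z', y', v') -
        (xb, pb, qb, fun i => L i xb - yb i - r i, yb, fun i => adjoint (K i) (pb i)))
      = ⟪x' - xb, τ⁻¹ • (x - x') - ∑ i, adjoint (L i) (v i - adjoint (K i) (pb i))⟫
        + ∑ i, (⟪p' i - pb i, (θ1 i)⁻¹ • (p i - p' i) + K i (zz i - (L i xb - yb i - r i))⟫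
          + ⟪q' i - qb i, (θ2 i)⁻¹ • (q i - q' i) + M i (y i - yb i)⟫) := by
  obtain ⟨-, -, -, hz', hy', hv'⟩ := hξ
  have hz0 : ∀ i, (γ1 i)⁻¹ • (zz i - z' i) + adjoint (K i) (p i - p' i - (p' i - pb i))
      + (v' i - adjoint (K i) (pb i)) = 0 := by
    intro i
    rw [hz' i, sub_add_cancel_left, smul_neg, inv_smul_smul₀ (hγ1 i).ne']
    simp only [map_sub, map_smul]
    module
  have hy0 : ∀ i, (γ2 i)⁻¹ • (y i - y' i) + adjoint (M i) (q i - q' i - (q' i - qb i))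
      + (v' i - adjoint (K i) (pb i)) = 0 := by
    intro i
    rw [hy' i, sub_add_cancel_left, smul_neg, inv_smul_smul₀ (hγ2 i).ne', hKM i]
    simp only [map_sub, map_smul]
    module
  have hv0 : ∀ i, (σ i)⁻¹ • (v i - v' i) - L i (x - x' - (x' - xb))
      - (z' i - (L i xb - yb i - r i)) - (y' i - yb i) = 0 := by
    intro i
    rw [hv' i, sub_add_cancel_left, smul_neg, inv_smul_smul₀ (hσ i).ne']
    simp only [map_sub, map_smul]
    module
  simp only [Prod.mk_sub_mk, metricForm_apply_eq_inner, Pi.sub_apply]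
  simp only [hz0, hy0, hv0, inner_zero_right, add_zero, sub_add_sub_cancel]

theorem inner_le_metricForm_of_isExactStep (hτ : 0 < τ) (hθ1 : ∀ i, 0 < θ1 i)
    (hθ2 : ∀ i, 0 < θ2 i) (hγ1 : ∀ i, 0 < γ1 i) (hγ2 : ∀ i, 0 < γ2 i) (hσ : ∀ i, 0 < σ i)
    (hA : MonoOp A) (hB : ∀ i, MonoOp (B i)) (hD : ∀ i, MonoOp (D i))
    {xb : H} {pb : ∀ i, X i} {qb : ∀ i, Y i} {yb : ∀ i, G i}
    (hsolA : z - ∑ i, adjoint (L i) (adjoint (K i) (pb i)) - C xb ∈ A xb)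
    (hsolB : ∀ i, K i (L i xb - yb i - r i) ∈ invOp (B i) (pb i))
    (hsolD : ∀ i, M i (yb i) ∈ invOp (D i) (qb i))
    (hKM : ∀ i, adjoint (K i) (pb i) = adjoint (M i) (qb i)) {ξ ξ' : PDSpace H G X Y}
    (hξ : IsExactStep τ θ1 θ2 γ1 γ2 σ L K M A B D C z r ξ ξ') :
    ⟪ξ'.1 - xb, C ξ.1 - C xb⟫ ≤ metricForm τ θ1 θ2 γ1 γ2 σ L K M (ξ - ξ')
      (ξ' - (xb, pb, qb, fun i => L i xb - yb i - r i, yb, fun i => adjoint (K i) (pb i))) := by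
  obtain ⟨x, p, q, zz, y, v⟩ := ξ
  obtain ⟨x', p', q', z', y', v'⟩ := ξ'
  rw [metricForm_sub_eq_of_isExactStep τ θ1 θ2 γ1 γ2 σ L K M A B D C z r hγ1 hγ2 hσ hKM hξ]
  obtain ⟨hx', hp', hq', -⟩ := hξ
  have hAmono : ⟪x' - xb, C x - C xb⟫ ≤ ⟪x' - xb, τ⁻¹ • (x - x')
      - ∑ i, adjoint (L i) (v i - adjoint (K i) (pb i))⟫ := by
    have h := hA (hx'.inv_smul_sub_mem hτ.ne') hsolA
    rw [sub_right_comm x, smul_sub, inv_smul_smul₀ hτ.ne'] at h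
    have hvec : τ⁻¹ • (x - x') - (C x + ∑ i, adjoint (L i) (v i) - z)
        - (z - ∑ i, adjoint (L i) (adjoint (K i) (pb i)) - C xb)
        = (τ⁻¹ • (x - x') - ∑ i, adjoint (L i) (v i - adjoint (K i) (pb i))) - (C x - C xb) := by
      simp only [map_sub, Finset.sum_sub_distrib]
      abel
    rw [hvec, inner_sub_right] at h
    linarith
  have hBmono : ∀ i, 0 ≤ ⟪p' i - pb i,
      (θ1 i)⁻¹ • (p i - p' i) + K i (zz i - (L i xb - yb i - r i))⟫ := by
    intro i
    have h := (hB i).invOp ((hp' i).inv_smul_sub_mem (hθ1 i).ne') (hsolB i)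
    rwa [add_sub_right_comm, smul_add, inv_smul_smul₀ (hθ1 i).ne', add_sub_assoc,
      ← map_sub] at h
  have hDmono : ∀ i, 0 ≤ ⟪q' i - qb i, (θ2 i)⁻¹ • (q i - q' i) + M i (y i - yb i)⟫ := by
    intro i
    have h := (hD i).invOp ((hq' i).inv_smul_sub_mem (hθ2 i).ne') (hsolD i)
    rwa [add_sub_right_comm, smul_add, inv_smul_smul₀ (hθ2 i).ne', add_sub_assoc,
      ← map_sub] at h
  linarith [Finset.sum_nonneg fun i (_ : i ∈ Finset.univ) => add_nonneg (hBmono i) (hDmono i)]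

end Algorithm

theorem stmt1_general {m : ℕ}
    {H : Type*} [NormedAddCommGroup H] [InnerProductSpace ℝ H] [CompleteSpace H]
    {G : Fin m → Type*} [∀ i, NormedAddCommGroup (G i)] [∀ i, InnerProductSpace ℝ (G i)]
    [∀ i, CompleteSpace (G i)]
    {X : Fin m → Type*} [∀ i, NormedAddCommGroup (X i)] [∀ i, InnerProductSpace ℝ (X i)]
    [∀ i, CompleteSpace (X i)]
    {Y : Fin m → Type*} [∀ i, NormedAddCommGroup (Y i)] [∀ i, InnerProductSpace ℝ (Y i)]
    [∀ i, CompleteSpace (Y i)]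
    (z : H) (A : H → Set H) (hA : MaxMonoOp A)
    (μ : ℝ) (hμ : 0 < μ) (C : H → H)
    (r : ∀ i, G i)
    (B : ∀ i, X i → Set (X i)) (hB : ∀ i, MaxMonoOp (B i))
    (D : ∀ i, Y i → Set (Y i)) (hD : ∀ i, MaxMonoOp (D i))
    (L : ∀ i, H →L[ℝ] G i)
    (K : ∀ i, G i →L[ℝ] X i)
    (M : ∀ i, G i →L[ℝ] Y i)
    (hCco : ∀ x y : H, μ⁻¹ * ‖C x - C y‖ ^ 2 ≤ ⟪x - y, C x - C y⟫)
    -- step sizes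
    (τ : ℝ) (hτ : 0 < τ)
    (θ1 θ2 γ1 γ2 σ : Fin m → ℝ)
    (hθ1 : ∀ i, 0 < θ1 i) (hθ2 : ∀ i, 0 < θ2 i)
    (hγ1 : ∀ i, 0 < γ1 i) (hγ2 : ∀ i, 0 < γ2 i) (hσ : ∀ i, 0 < σ i)
    (α : ℝ)
    (hα : IsGreatest ({Real.sqrt (τ * ∑ i, σ i * ‖L i‖ ^ 2)} ∪
        Set.range (fun j => Real.sqrt (θ1 j * γ1 j * ‖K j‖ ^ 2)) ∪
        Set.range (fun j => Real.sqrt (θ2 j * γ2 j * ‖M j‖ ^ 2))) α)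
    -- `2 μ⁻¹ (1 - α) · min{1/τ, 1/θ1ᵢ, 1/θ2ᵢ, 1/γ1ᵢ, 1/γ2ᵢ, 1/σᵢ} > 1`
    (hstep : 1 < 2 * μ⁻¹ * (1 - α) * (1 / τ) ∧ ∀ i,
        1 < 2 * μ⁻¹ * (1 - α) * (1 / θ1 i) ∧ 1 < 2 * μ⁻¹ * (1 - α) * (1 / θ2 i) ∧
        1 < 2 * μ⁻¹ * (1 - α) * (1 / γ1 i) ∧ 1 < 2 * μ⁻¹ * (1 - α) * (1 / γ2 i) ∧
        1 < 2 * μ⁻¹ * (1 - α) * (1 / σ i))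
    -- relaxation parameters
    (ε : ℝ) (hε : ε ∈ Set.Ioo (0:ℝ) 1) (lam : ℕ → ℝ) (hlam : ∀ n, lam n ∈ Set.Icc ε 1)
    -- the sequences generated by Algorithm 3.1
    (x xt : ℕ → H)
    (p pt : ℕ → ∀ i, X i) (q qt : ℕ → ∀ i, Y i)
    (zz zt y yt v vt u1 u2 : ℕ → ∀ i, G i)
    (hxt : ∃ j : ℕ → H,
      (∀ n, IsRes τ A
        (x n - τ • (C (x n) + ∑ i, ContinuousLinearMap.adjoint (L i) (v n i) - z)) (j n)) ∧
      Summable (fun n => ‖xt n - j n‖))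
    (hpt : ∀ i, ∃ j : ℕ → X i,
      (∀ n, IsRes (θ1 i) (invOp (B i)) (p n i + θ1 i • K i (zz n i)) (j n)) ∧
      Summable (fun n => ‖pt n i - j n‖))
    (hqt : ∀ i, ∃ j : ℕ → Y i,
      (∀ n, IsRes (θ2 i) (invOp (D i)) (q n i + θ2 i • M i (y n i)) (j n)) ∧
      Summable (fun n => ‖qt n i - j n‖))
    (hu1 : ∀ i, Summable (fun n => ‖u1 n i - (zz n i + γ1 i •
        (ContinuousLinearMap.adjoint (K i) (p n i - (2:ℝ) • pt n i) + v n i +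
          σ i • (L i ((2:ℝ) • xt n - x n) - r i)))‖))
    (hu2 : ∀ i, Summable (fun n => ‖u2 n i - (y n i + γ2 i •
        (ContinuousLinearMap.adjoint (M i) (q n i - (2:ℝ) • qt n i) + v n i +
          σ i • (L i ((2:ℝ) • xt n - x n) - r i)))‖))
    (hzt : ∀ i, Summable (fun n => ‖zt n i -
        ((1 + σ i * γ2 i) / (1 + σ i * (γ1 i + γ2 i))) •
          (u1 n i - (σ i * γ1 i / (1 + σ i * γ2 i)) • u2 n i)‖))
    (hyt : ∀ i, Summable (fun n => ‖yt n i -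
        (1 / (1 + σ i * γ2 i)) • (u2 n i - (σ i * γ2 i) • zt n i)‖))
    (hvt : ∀ i, Summable (fun n => ‖vt n i -
        (v n i + σ i • (L i ((2:ℝ) • xt n - x n) - r i - zt n i - yt n i))‖))
    (hx : ∀ n, x (n+1) = x n + lam n • (xt n - x n))
    (hp : ∀ n i, p (n+1) i = p n i + lam n • (pt n i - p n i))
    (hq : ∀ n i, q (n+1) i = q n i + lam n • (qt n i - q n i))
    (hz : ∀ n i, zz (n+1) i = zz n i + lam n • (zt n i - zz n i))
    (hy : ∀ n i, y (n+1) i = y n i + lam n • (yt n i - y n i))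
    (hv : ∀ n i, v (n+1) i = v n i + lam n • (vt n i - v n i))
    -- the primal-dual solution to which the sequences converge weakly
    (xb : H) (pb : ∀ i, X i) (qb : ∀ i, Y i) (yb : ∀ i, G i)
    (hsol : (z - ∑ i, ContinuousLinearMap.adjoint (L i)
          (ContinuousLinearMap.adjoint (K i) (pb i)) - C xb ∈ A xb) ∧
      (∀ i, K i (L i xb - yb i - r i) ∈ invOp (B i) (pb i)) ∧
      (∀ i, M i (yb i) ∈ invOp (D i) (qb i)) ∧
      (∀ i, ContinuousLinearMap.adjoint (K i) (pb i) =
          ContinuousLinearMap.adjoint (M i) (qb i)) ∧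
      WConv x xb ∧
      (∀ i, WConv (fun n => p n i) (pb i)) ∧
      (∀ i, WConv (fun n => q n i) (qb i)) ∧
      (∀ i, WConv (fun n => y n i) (yb i)))
    -- `C` is uniformly monotone at `xb`
    (hunif : ∃ φ : ℝ → ℝ≥0∞, MonotoneOn φ (Set.Ici 0) ∧
      (∀ t : ℝ, 0 ≤ t → (φ t = 0 ↔ t = 0)) ∧
      (∀ w : H, φ ‖w - xb‖ ≤ ENNReal.ofReal ⟪w - xb, C w - C xb⟫)) :
    Tendsto x atTop (𝓝 xb) := by
  obtain ⟨φ, hφmono, hφzero, hφle⟩ := hunif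
  obtain ⟨hsolA, hsolB, hsolD, hKM, -⟩ := hsol
  obtain ⟨jx, hjx, hxt⟩ := hxt
  choose jp hjp hpt using hpt
  choose jq hjq hqt using hqt
  obtain ⟨hβ, hκ⟩ := pos_and_sub_inv_pos_of_one_lt_mul (c := 2 * μ⁻¹) (β := (1 - α) * τ⁻¹)
    (by positivity) (by simpa only [one_div, mul_assoc] using hstep.1)
  have hlow := metricForm_self_ge τ θ1 θ2 γ1 γ2 σ L K M hτ hθ1 hθ2 hγ1 hγ2 hσ
    (sub_nonneg.1 (pos_of_mul_pos_left hβ (inv_pos.2 hτ).le).le) (hα.2 (by simp))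
    (fun _ => hα.2 (by simp)) (fun _ => hα.2 (by simp))
  obtain ⟨hbdd, hC⟩ := (metricForm τ θ1 θ2 γ1 γ2 σ L K M).bddAbove_and_tendsto_of_forwardBackward
    (metricForm_symm τ θ1 θ2 γ1 γ2 σ L K M) hβ hlow hκ hε.1
    (s := (xb, pb, qb, fun i => L i xb - yb i - r i, yb,
      fun i => ContinuousLinearMap.adjoint (K i) (pb i)))
    (ξ := fun n => (x n, p n, q n, zz n, y n, v n))
    (fun w => hCco w xb) hlam
    (fun n => inner_le_metricForm_of_isExactStep τ θ1 θ2 γ1 γ2 σ L K M A B D C z r hτ hθ1 hθ2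
      hγ1 hγ2 hσ hA.1 (fun i => (hB i).1) (fun i => (hD i).1) hsolA hsolB hsolD hKM
      (isExactStep_exactStep τ θ1 θ2 γ1 γ2 σ L K M A B D C z r hγ1 hγ2 hσ (hjx n)
        (fun i => hjp i n) (fun i => hjq i n)))
    (fun n => Prod.ext (hx n) <| Prod.ext (funext (hp n)) <| Prod.ext (funext (hq n)) <|
      Prod.ext (funext (hz n)) <| Prod.ext (funext (hy n)) (funext (hv n)))
    (approx_exactStep γ1 γ2 σ L K M r hxt hpt hqt hu1 hu2 hzt hyt hvt)
  exact tendsto_of_uniformlyMonotoneAt hφmono (fun t ht => (hφzero t ht).1) hφle hbdd hC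

theorem stmt1 {m : ℕ}
    {H : Type*} [NormedAddCommGroup H] [InnerProductSpace ℝ H] [CompleteSpace H]
    {G : Fin m → Type*} [∀ i, NormedAddCommGroup (G i)] [∀ i, InnerProductSpace ℝ (G i)]
    [∀ i, CompleteSpace (G i)]
    {X : Fin m → Type*} [∀ i, NormedAddCommGroup (X i)] [∀ i, InnerProductSpace ℝ (X i)]
    [∀ i, CompleteSpace (X i)]
    {Y : Fin m → Type*} [∀ i, NormedAddCommGroup (Y i)] [∀ i, InnerProductSpace ℝ (Y i)]
    [∀ i, CompleteSpace (Y i)]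
    (z : H) (A : H → Set H) (hA : MaxMonoOp A)
    (μ : ℝ) (hμ : 0 < μ) (C : H → H)
    (hCmono : ∀ x y : H, (0:ℝ) ≤ ⟪x - y, C x - C y⟫)
    (r : ∀ i, G i)
    (B : ∀ i, X i → Set (X i)) (hB : ∀ i, MaxMonoOp (B i))
    (D : ∀ i, Y i → Set (Y i)) (hD : ∀ i, MaxMonoOp (D i))
    (L : ∀ i, H →L[ℝ] G i) (hL : ∀ i, L i ≠ 0)
    (K : ∀ i, G i →L[ℝ] X i) (hK : ∀ i, K i ≠ 0)
    (M : ∀ i, G i →L[ℝ] Y i) (hM : ∀ i, M i ≠ 0)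
    (hCco : ∀ x y : H, μ⁻¹ * ‖C x - C y‖ ^ 2 ≤ ⟪x - y, C x - C y⟫)
    -- step sizes
    (τ : ℝ) (hτ : 0 < τ)
    (θ1 θ2 γ1 γ2 σ : Fin m → ℝ)
    (hθ1 : ∀ i, 0 < θ1 i) (hθ2 : ∀ i, 0 < θ2 i)
    (hγ1 : ∀ i, 0 < γ1 i) (hγ2 : ∀ i, 0 < γ2 i) (hσ : ∀ i, 0 < σ i)
    (α : ℝ)
    (hα : IsGreatest ({Real.sqrt (τ * ∑ i, σ i * ‖L i‖ ^ 2)} ∪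
        Set.range (fun j => Real.sqrt (θ1 j * γ1 j * ‖K j‖ ^ 2)) ∪
        Set.range (fun j => Real.sqrt (θ2 j * γ2 j * ‖M j‖ ^ 2))) α)
    -- `2 μ⁻¹ (1 - α) · min{1/τ, 1/θ1ᵢ, 1/θ2ᵢ, 1/γ1ᵢ, 1/γ2ᵢ, 1/σᵢ} > 1`
    (hstep : 1 < 2 * μ⁻¹ * (1 - α) * (1 / τ) ∧ ∀ i,
        1 < 2 * μ⁻¹ * (1 - α) * (1 / θ1 i) ∧ 1 < 2 * μ⁻¹ * (1 - α) * (1 / θ2 i) ∧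
        1 < 2 * μ⁻¹ * (1 - α) * (1 / γ1 i) ∧ 1 < 2 * μ⁻¹ * (1 - α) * (1 / γ2 i) ∧
        1 < 2 * μ⁻¹ * (1 - α) * (1 / σ i))
    -- range condition
    (hran : ∃ (x : H) (u : H) (w : ∀ i, G i), u ∈ A x ∧
        (∀ i, w i ∈ parOp (compOp (K i) (B i)) (compOp (M i) (D i)) (L i x - r i)) ∧
        z = u + ∑ i, ContinuousLinearMap.adjoint (L i) (w i) + C x)
    -- relaxation parameters
    (ε : ℝ) (hε : ε ∈ Set.Ioo (0:ℝ) 1) (lam : ℕ → ℝ) (hlam : ∀ n, lam n ∈ Set.Icc ε 1)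
    -- the sequences generated by Algorithm 3.1
    (x xt : ℕ → H)
    (p pt : ℕ → ∀ i, X i) (q qt : ℕ → ∀ i, Y i)
    (zz zt y yt v vt u1 u2 : ℕ → ∀ i, G i)
    (hxt : ∃ j : ℕ → H,
      (∀ n, IsRes τ A
        (x n - τ • (C (x n) + ∑ i, ContinuousLinearMap.adjoint (L i) (v n i) - z)) (j n)) ∧
      Summable (fun n => ‖xt n - j n‖))
    (hpt : ∀ i, ∃ j : ℕ → X i,
      (∀ n, IsRes (θ1 i) (invOp (B i)) (p n i + θ1 i • K i (zz n i)) (j n)) ∧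
      Summable (fun n => ‖pt n i - j n‖))
    (hqt : ∀ i, ∃ j : ℕ → Y i,
      (∀ n, IsRes (θ2 i) (invOp (D i)) (q n i + θ2 i • M i (y n i)) (j n)) ∧
      Summable (fun n => ‖qt n i - j n‖))
    (hu1 : ∀ i, Summable (fun n => ‖u1 n i - (zz n i + γ1 i •
        (ContinuousLinearMap.adjoint (K i) (p n i - (2:ℝ) • pt n i) + v n i +
          σ i • (L i ((2:ℝ) • xt n - x n) - r i)))‖))
    (hu2 : ∀ i, Summable (fun n => ‖u2 n i - (y n i + γ2 i •
        (ContinuousLinearMap.adjoint (M i) (q n i - (2:ℝ) • qt n i) + v n i +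
          σ i • (L i ((2:ℝ) • xt n - x n) - r i)))‖))
    (hzt : ∀ i, Summable (fun n => ‖zt n i -
        ((1 + σ i * γ2 i) / (1 + σ i * (γ1 i + γ2 i))) •
          (u1 n i - (σ i * γ1 i / (1 + σ i * γ2 i)) • u2 n i)‖))
    (hyt : ∀ i, Summable (fun n => ‖yt n i -
        (1 / (1 + σ i * γ2 i)) • (u2 n i - (σ i * γ2 i) • zt n i)‖))
    (hvt : ∀ i, Summable (fun n => ‖vt n i -
        (v n i + σ i • (L i ((2:ℝ) • xt n - x n) - r i - zt n i - yt n i))‖))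
    (hx : ∀ n, x (n+1) = x n + lam n • (xt n - x n))
    (hp : ∀ n i, p (n+1) i = p n i + lam n • (pt n i - p n i))
    (hq : ∀ n i, q (n+1) i = q n i + lam n • (qt n i - q n i))
    (hz : ∀ n i, zz (n+1) i = zz n i + lam n • (zt n i - zz n i))
    (hy : ∀ n i, y (n+1) i = y n i + lam n • (yt n i - y n i))
    (hv : ∀ n i, v (n+1) i = v n i + lam n • (vt n i - v n i))
    -- the primal-dual solution to which the sequences converge weakly
    (xb : H) (pb : ∀ i, X i) (qb : ∀ i, Y i) (yb : ∀ i, G i)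
    (hsol : (z - ∑ i, ContinuousLinearMap.adjoint (L i)
          (ContinuousLinearMap.adjoint (K i) (pb i)) - C xb ∈ A xb) ∧
      (∀ i, K i (L i xb - yb i - r i) ∈ invOp (B i) (pb i)) ∧
      (∀ i, M i (yb i) ∈ invOp (D i) (qb i)) ∧
      (∀ i, ContinuousLinearMap.adjoint (K i) (pb i) =
          ContinuousLinearMap.adjoint (M i) (qb i)) ∧
      WConv x xb ∧
      (∀ i, WConv (fun n => p n i) (pb i)) ∧
      (∀ i, WConv (fun n => q n i) (qb i)) ∧
      (∀ i, WConv (fun n => y n i) (yb i)))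
    -- `C` is uniformly monotone at `xb`
    (hunif : ∃ φ : ℝ → ℝ≥0∞, MonotoneOn φ (Set.Ici 0) ∧
      (∀ t : ℝ, 0 ≤ t → (φ t = 0 ↔ t = 0)) ∧
      (∀ w : H, φ ‖w - xb‖ ≤ ENNReal.ofReal ⟪w - xb, C w - C xb⟫)) :
    Tendsto x atTop (𝓝 xb) :=
  stmt1_general z A hA μ hμ C r B hB D hD L K M hCco τ hτ θ1 θ2 γ1 γ2 σ hθ1 hθ2 hγ1 hγ2 hσ α hα
    hstep ε hε lam hlam x xt p pt q qt zz zt y yt v vt u1 u2 hxt hpt hqt hu1 hu2 hzt hyt hvt hx hp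
    hq hz hy hv xb pb qb yb hsol hunif
end
end

section
/- An element x̄ ∈ H solves the primal inclusion of Problem 1.1, i.e. z ∈ Ax̄ + Σ_{i=1}^m L_i*((K_i* ∘ B_i ∘ K_i) □ (M_i* ∘ D_i ∘ M_i))(L_i x̄ − r_i) + Cx̄, if and only if there exist p̄_i ∈ X_i, q̄_i ∈ Y_i, ȳ_i ∈ G_i (i = 1,…,m) such that z − Σ_i L_i* K_i* p̄_i ∈ Ax̄ + Cx̄, K_i(L_i x̄ − ȳ_i − r_i) ∈ B_i⁻¹ p̄_i, M_i ȳ_i ∈ D_i⁻¹ q̄_i and K_i* p̄_i = M_i* q̄_i for all i = 1,…,m. -/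
open scoped RealInnerProductSpace
open Filter Topology

noncomputable section

theorem stmt4 {m : ℕ}
    {H : Type*} [NormedAddCommGroup H] [InnerProductSpace ℝ H] [CompleteSpace H]
    {G : Fin m → Type*} [∀ i, NormedAddCommGroup (G i)] [∀ i, InnerProductSpace ℝ (G i)]
    [∀ i, CompleteSpace (G i)]
    {X : Fin m → Type*} [∀ i, NormedAddCommGroup (X i)] [∀ i, InnerProductSpace ℝ (X i)]
    [∀ i, CompleteSpace (X i)]
    {Y : Fin m → Type*} [∀ i, NormedAddCommGroup (Y i)] [∀ i, InnerProductSpace ℝ (Y i)]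
    [∀ i, CompleteSpace (Y i)]
    (z : H) (A : H → Set H) (hA : MaxMonoOp A)
    (μ : ℝ) (hμ : 0 < μ) (C : H → H)
    (hCmono : ∀ x y : H, (0:ℝ) ≤ ⟪x - y, C x - C y⟫)
    (hCco : ∀ x y : H, μ⁻¹ * ‖C x - C y‖ ^ 2 ≤ ⟪x - y, C x - C y⟫)
    (r : ∀ i, G i)
    (B : ∀ i, X i → Set (X i)) (hB : ∀ i, MaxMonoOp (B i))
    (D : ∀ i, Y i → Set (Y i)) (hD : ∀ i, MaxMonoOp (D i))
    (L : ∀ i, H →L[ℝ] G i) (hL : ∀ i, L i ≠ 0)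
    (K : ∀ i, G i →L[ℝ] X i) (hK : ∀ i, K i ≠ 0)
    (M : ∀ i, G i →L[ℝ] Y i) (hM : ∀ i, M i ≠ 0)
    (xb : H) :
    (∃ (u : H) (w : ∀ i, G i), u ∈ A xb ∧
        (∀ i, w i ∈ parOp (compOp (K i) (B i)) (compOp (M i) (D i)) (L i xb - r i)) ∧
        z = u + ∑ i, ContinuousLinearMap.adjoint (L i) (w i) + C xb) ↔
      (∃ (pb : ∀ i, X i) (qb : ∀ i, Y i) (yb : ∀ i, G i),
        (z - ∑ i, ContinuousLinearMap.adjoint (L i) (ContinuousLinearMap.adjoint (K i) (pb i)) -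
            C xb ∈ A xb) ∧
        (∀ i, K i (L i xb - yb i - r i) ∈ invOp (B i) (pb i)) ∧
        (∀ i, M i (yb i) ∈ invOp (D i) (qb i)) ∧
        (∀ i, ContinuousLinearMap.adjoint (K i) (pb i) =
            ContinuousLinearMap.adjoint (M i) (qb i))) := by
  constructor
  · rintro ⟨u, w, hu, hw, hz⟩
    simp only [parOp, invOp, sumOp, compOp, Set.mem_setOf_eq, Set.mem_image] at hw
    choose a ha b hb hab using hw
    choose p hp hpw using ha
    choose q hq hqw using hb
    refine ⟨p, q, b, ?_, ?_, ?_, ?_⟩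
    · have : z - ∑ i, ContinuousLinearMap.adjoint (L i)
          (ContinuousLinearMap.adjoint (K i) (p i)) - C xb = u := by
        rw [hz]
        have : ∀ i, ContinuousLinearMap.adjoint (L i) (ContinuousLinearMap.adjoint (K i) (p i))
            = ContinuousLinearMap.adjoint (L i) (w i) := fun i => by rw [hpw i]
        simp only [this]; abel
      rwa [this]
    · intro i
      have h2 : a i = L i xb - r i - b i := by rw [hab i]; abel
      have : L i xb - b i - r i = a i := by rw [h2]; abel
      rw [invOp, Set.mem_setOf_eq, this]
      exact hp i
    · intro i
      exact hq i
    · intro i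
      rw [hpw i, hqw i]
  · rintro ⟨pb, qb, yb, hA', hB', hD', heq⟩
    refine ⟨_, fun i => ContinuousLinearMap.adjoint (K i) (pb i), hA', ?_, by abel⟩
    intro i
    simp only [parOp, invOp, sumOp, compOp, Set.mem_setOf_eq, Set.mem_image]
    exact ⟨L i xb - yb i - r i, ⟨pb i, hB' i, rfl⟩, yb i, ⟨qb i, hD' i, (heq i).symm⟩, by abel⟩
end
end

section
/- Let K = H ⊕ X ⊕ Y ⊕ G ⊕ G ⊕ G with X = X₁⊕…⊕X_m, Y = Y₁⊕…⊕Y_m, G = G₁⊕…⊕G_m, and define M : K → 2^K by M(x, p, q, z, y, v) = (−z₀ + Ax) × B₁⁻¹p₁ × … × B_m⁻¹p_m × D₁⁻¹q₁ × … × D_m⁻¹q_m × {(−v₁,…,−v_m)} × {(−v₁,…,−v_m)} × {(r₁ + z₁ + y₁, …, r_m + z_m + y_m)}, the skew linear operator S : K → K by S(x, p, q, z, y, v) = (Σ_i L_i* v_i, −K₁z₁,…,−K_m z_m, −M₁y₁,…,−M_m y_m, K₁*p₁,…,K_m*p_m, M₁*q₁,…,M_m*q_m, −L₁x,…,−L_m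 x), and Q : K → K by Q(x, p, q, z, y, v) = (Cx, 0, 0, 0, 0, 0). Then: (a) z₀ ∈ ran(A + Σ_{i=1}^m L_i*((K_i* ∘ B_i ∘ K_i) □ (M_i* ∘ D_i ∘ M_i))(L_i · − r_i) + C) if and only if zer(M + S + Q) ≠ ∅; and (b) every (x̄, p̄, q̄, z̄, ȳ, v̄) ∈ zer(M + S + Q) has the property that (x̄, p̄, q̄, ȳ) is a primal-dual solution to Problem 1.1. -/
open scoped RealInnerProductSpace
open Filter Topology

noncomputable section

theorem stmt5 {m : ℕ}
    {H : Type*} [NormedAddCommGroup H] [InnerProductSpace ℝ H] [CompleteSpace H]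
    {G : Fin m → Type*} [∀ i, NormedAddCommGroup (G i)] [∀ i, InnerProductSpace ℝ (G i)]
    [∀ i, CompleteSpace (G i)]
    {X : Fin m → Type*} [∀ i, NormedAddCommGroup (X i)] [∀ i, InnerProductSpace ℝ (X i)]
    [∀ i, CompleteSpace (X i)]
    {Y : Fin m → Type*} [∀ i, NormedAddCommGroup (Y i)] [∀ i, InnerProductSpace ℝ (Y i)]
    [∀ i, CompleteSpace (Y i)]
    (z₀ : H) (A : H → Set H) (hA : MaxMonoOp A)
    (μ : ℝ) (hμ : 0 < μ) (C : H → H)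
    (hCmono : ∀ x y : H, (0:ℝ) ≤ ⟪x - y, C x - C y⟫)
    (r : ∀ i, G i)
    (B : ∀ i, X i → Set (X i)) (hB : ∀ i, MaxMonoOp (B i))
    (D : ∀ i, Y i → Set (Y i)) (hD : ∀ i, MaxMonoOp (D i))
    (L : ∀ i, H →L[ℝ] G i) (hL : ∀ i, L i ≠ 0)
    (K : ∀ i, G i →L[ℝ] X i) (hK : ∀ i, K i ≠ 0)
    (M : ∀ i, G i →L[ℝ] Y i) (hM : ∀ i, M i ≠ 0)
    (hCco : ∀ x y : H, μ⁻¹ * ‖C x - C y‖ ^ 2 ≤ ⟪x - y, C x - C y⟫) :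
    -- `(x, p, q, zc, y, v) ∈ zer(M + S + Q)` is spelled out componentwise below
    ((∃ (x : H) (u : H) (w : ∀ i, G i), u ∈ A x ∧
        (∀ i, w i ∈ parOp (compOp (K i) (B i)) (compOp (M i) (D i)) (L i x - r i)) ∧
        z₀ = u + ∑ i, ContinuousLinearMap.adjoint (L i) (w i) + C x) ↔
      (∃ (x : H) (p : ∀ i, X i) (q : ∀ i, Y i) (zc y v : ∀ i, G i) (a : H),
        a ∈ A x ∧
        (-z₀ + a) + (∑ i, ContinuousLinearMap.adjoint (L i) (v i)) + C x = 0 ∧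
        (∀ i, ∃ b ∈ invOp (B i) (p i), b + -(K i (zc i)) = 0) ∧
        (∀ i, ∃ d ∈ invOp (D i) (q i), d + -(M i (y i)) = 0) ∧
        (∀ i, -(v i) + ContinuousLinearMap.adjoint (K i) (p i) = 0) ∧
        (∀ i, -(v i) + ContinuousLinearMap.adjoint (M i) (q i) = 0) ∧
        (∀ i, (r i + zc i + y i) + -(L i x) = 0))) ∧
    (∀ (x : H) (p : ∀ i, X i) (q : ∀ i, Y i) (zc y v : ∀ i, G i),
      (∃ a : H, a ∈ A x ∧
        (-z₀ + a) + (∑ i, ContinuousLinearMap.adjoint (L i) (v i)) + C x = 0 ∧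
        (∀ i, ∃ b ∈ invOp (B i) (p i), b + -(K i (zc i)) = 0) ∧
        (∀ i, ∃ d ∈ invOp (D i) (q i), d + -(M i (y i)) = 0) ∧
        (∀ i, -(v i) + ContinuousLinearMap.adjoint (K i) (p i) = 0) ∧
        (∀ i, -(v i) + ContinuousLinearMap.adjoint (M i) (q i) = 0) ∧
        (∀ i, (r i + zc i + y i) + -(L i x) = 0)) →
      ((z₀ - ∑ i, ContinuousLinearMap.adjoint (L i)
          (ContinuousLinearMap.adjoint (K i) (p i)) - C x ∈ A x) ∧
        (∀ i, K i (L i x - y i - r i) ∈ invOp (B i) (p i)) ∧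
        (∀ i, M i (y i) ∈ invOp (D i) (q i)) ∧
        (∀ i, ContinuousLinearMap.adjoint (K i) (p i) =
            ContinuousLinearMap.adjoint (M i) (q i)))) := by

  classical
  constructor
  · constructor
    · rintro ⟨x, u, w, hu, hw, heq⟩
      simp only [parOp, invOp, sumOp, compOp, Set.mem_setOf_eq, Set.mem_image] at hw
      choose zc hzc y hy heq2 using hw
      choose p hp hpw using hzc
      choose q hq hqw using hy
      refine ⟨x, p, q, zc, y, w, u, hu, by rw [heq]; abel, ?_, ?_, ?_, ?_, ?_⟩
      · intro i
        refine ⟨K i (zc i), ?_, by abel⟩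
        simpa [invOp, Set.mem_setOf_eq] using hp i
      · intro i
        refine ⟨M i (y i), ?_, by abel⟩
        simpa [invOp, Set.mem_setOf_eq] using hq i
      · intro i; rw [hpw i]; abel
      · intro i; rw [hqw i]; abel
      · intro i
        have h := heq2 i
        rw [show (r i + zc i + y i) + -(L i x) = (zc i + y i) - (L i x - r i) by abel,
          ← h, sub_self]
    · rintro ⟨x, p, q, zc, y, v, a, ha, h0, hb, hd, hkp, hmq, hr⟩
      have hv : ∀ i, v i = ContinuousLinearMap.adjoint (K i) (p i) :=
        fun i => neg_add_eq_zero.mp (hkp i)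
      refine ⟨x, a, v, ha, ?_, ?_⟩
      · intro i
        simp only [parOp, invOp, sumOp, compOp, Set.mem_setOf_eq, Set.mem_image]
        obtain ⟨b, hbmem, hb0⟩ := hb i
        obtain ⟨d, hdmem, hd0⟩ := hd i
        have hb' : b = K i (zc i) := add_neg_eq_zero.mp hb0
        have hd' : d = M i (y i) := add_neg_eq_zero.mp hd0
        have hr' : r i + zc i + y i = L i x := add_neg_eq_zero.mp (hr i)
        refine ⟨zc i, ⟨p i, ?_, (hv i).symm⟩, y i,
          ⟨q i, ?_, (neg_add_eq_zero.mp (hmq i)).symm⟩, by rw [← hr']; abel⟩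
        · have := hbmem; rw [hb'] at this; exact this
        · have := hdmem; rw [hd'] at this; exact this
      · have h : -z₀ + (a + ∑ i, ContinuousLinearMap.adjoint (L i) (v i) + C x) = 0 := by
          rw [← h0]; abel
        exact neg_add_eq_zero.mp h
  · rintro x p q zc y v ⟨a, ha, h0, hb, hd, hkp, hmq, hr⟩
    have hv : ∀ i, v i = ContinuousLinearMap.adjoint (K i) (p i) :=
      fun i => neg_add_eq_zero.mp (hkp i)
    have hv' : ∀ i, v i = ContinuousLinearMap.adjoint (M i) (q i) :=
      fun i => neg_add_eq_zero.mp (hmq i)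
    refine ⟨?_, ?_, ?_, fun i => (hv i).symm.trans (hv' i)⟩
    · have hsum : ∑ i, ContinuousLinearMap.adjoint (L i)
          (ContinuousLinearMap.adjoint (K i) (p i)) =
          ∑ i, ContinuousLinearMap.adjoint (L i) (v i) :=
        Finset.sum_congr rfl (fun i _ => by rw [hv i])
      have ha' : z₀ - (∑ i, ContinuousLinearMap.adjoint (L i) (v i)) - C x - a =
          -(((-z₀ + a) + (∑ i, ContinuousLinearMap.adjoint (L i) (v i)) + C x)) := by abel
      rw [h0, neg_zero] at ha'
      have := sub_eq_zero.mp ha'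
      rw [hsum, this]
      exact ha
    · intro i
      obtain ⟨b, hbmem, hb0⟩ := hb i
      have hb' : b = K i (zc i) := add_neg_eq_zero.mp hb0
      have hr' : r i + zc i + y i = L i x := add_neg_eq_zero.mp (hr i)
      have hz : L i x - y i - r i = zc i := by rw [← hr']; abel
      show p i ∈ B i (K i (L i x - y i - r i))
      rw [hz, ← hb']
      exact hbmem
    · intro i
      obtain ⟨d, hdmem, hd0⟩ := hd i
      have hd' : d = M i (y i) := add_neg_eq_zero.mp hd0
      show q i ∈ D i (M i (y i))
      rw [← hd']
      exact hdmem
end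
end

section
/- Let K be a real Hilbert space, V : K → K a bounded linear self-adjoint operator which is ρ-strongly positive (⟨u, Vu⟩ ≥ ρ‖u‖² for all u ∈ K) for some ρ > 0 (so V is invertible with ‖V⁻¹‖ ≤ 1/ρ), and let Q : K → K be μ⁻¹-cocoercive for μ > 0. Then the operator B = V⁻¹ ∘ Q is (μ⁻¹ρ)-cocoercive with respect to the inner product ⟨u, w⟩_V = ⟨u, Vw⟩, i.e. for all u, w ∈ K: ⟨u − w, Bu − Bw⟩_V ≥ μ⁻¹ρ ‖Bu − Bw‖_V², where ‖·‖_V is the norm induced by ⟨·,·⟩_V. -/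
open scoped RealInnerProductSpace
open Filter Topology

noncomputable section

/-! With `q = Q u - Q w` we have `V (B u - B w) = q` and `B u - B w = V⁻¹ q`, so both sides are
inner products against `q`. Since `‖V⁻¹‖ ≤ 1/ρ`, the left side is at most `μ⁻¹ ‖q‖²`, which the
cocoercivity of `Q` bounds by `⟪u - w, q⟫`. -/

theorem ContinuousLinearMap.real_inner_apply_self_le {E : Type*} [NormedAddCommGroup E]
    [InnerProductSpace ℝ E] (T : E →L[ℝ] E) (x : E) : ⟪T x, x⟫ ≤ ‖T‖ * ‖x‖ ^ 2 :=
  calc ⟪T x, x⟫ ≤ ‖T x‖ * ‖x‖ := real_inner_le_norm _ _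
    _ ≤ ‖T‖ * ‖x‖ * ‖x‖ := by gcongr; exact T.le_opNorm x
    _ = ‖T‖ * ‖x‖ ^ 2 := by ring

theorem mul_inner_apply_le_of_cocoercive {E : Type*} [NormedAddCommGroup E]
    [InnerProductSpace ℝ E] {ρ μ : ℝ} (hρ : 0 < ρ) (hμ : 0 < μ) {W : E →L[ℝ] E}
    (hW : ‖W‖ ≤ 1 / ρ) {Q : E → E}
    (hQ : ∀ u w : E, μ⁻¹ * ‖Q u - Q w‖ ^ 2 ≤ ⟪u - w, Q u - Q w⟫) (u w : E) :
    μ⁻¹ * ρ * ⟪W (Q u - Q w), Q u - Q w⟫ ≤ ⟪u - w, Q u - Q w⟫ :=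
  calc μ⁻¹ * ρ * ⟪W (Q u - Q w), Q u - Q w⟫
      ≤ μ⁻¹ * ρ * (1 / ρ * ‖Q u - Q w‖ ^ 2) := by
        gcongr
        exact (W.real_inner_apply_self_le _).trans (by gcongr)
    _ = μ⁻¹ * ‖Q u - Q w‖ ^ 2 := by field_simp
    _ ≤ ⟪u - w, Q u - Q w⟫ := hQ u w

theorem stmt8_general
    {K : Type*} [NormedAddCommGroup K] [InnerProductSpace ℝ K]
    (V : K →L[ℝ] K)
    (ρ : ℝ) (hρ : 0 < ρ)
    -- `V` is invertible with `‖V⁻¹‖ ≤ 1/ρ`; `W` denotes its inverse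
    (W : K →L[ℝ] K) (hVW : ∀ u : K, V (W u) = u)
    (hWnorm : ‖W‖ ≤ 1 / ρ)
    (μ : ℝ) (hμ : 0 < μ)
    (Q : K → K) (hQ : ∀ u w : K, μ⁻¹ * ‖Q u - Q w‖ ^ 2 ≤ ⟪u - w, Q u - Q w⟫)
    -- `B = V⁻¹ ∘ Q`
    (B : K → K) (hB : ∀ u, B u = W (Q u)) :
    ∀ u w : K, μ⁻¹ * ρ * ⟪B u - B w, V (B u - B w)⟫ ≤ ⟪u - w, V (B u - B w)⟫ := by
  intro u w
  have hBsub : B u - B w = W (Q u - Q w) := by rw [hB, hB, map_sub]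
  rw [hBsub, hVW]
  exact mul_inner_apply_le_of_cocoercive hρ hμ hWnorm hQ u w

theorem stmt8
    {K : Type*} [NormedAddCommGroup K] [InnerProductSpace ℝ K] [CompleteSpace K]
    (V : K →L[ℝ] K) (hVsa : ∀ u w : K, ⟪V u, w⟫ = ⟪u, V w⟫)
    (ρ : ℝ) (hρ : 0 < ρ) (hVpos : ∀ u : K, ρ * ‖u‖ ^ 2 ≤ ⟪u, V u⟫)
    -- `V` is invertible with `‖V⁻¹‖ ≤ 1/ρ`; `W` denotes its inverse
    (W : K →L[ℝ] K) (hWV : ∀ u : K, W (V u) = u) (hVW : ∀ u : K, V (W u) = u)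
    (hWnorm : ‖W‖ ≤ 1 / ρ)
    (μ : ℝ) (hμ : 0 < μ)
    (Q : K → K) (hQ : ∀ u w : K, μ⁻¹ * ‖Q u - Q w‖ ^ 2 ≤ ⟪u - w, Q u - Q w⟫)
    -- `B = V⁻¹ ∘ Q`
    (B : K → K) (hB : ∀ u, B u = W (Q u)) :
    ∀ u w : K, μ⁻¹ * ρ * ⟪B u - B w, V (B u - B w)⟫ ≤ ⟪u - w, V (B u - B w)⟫ :=
  stmt8_general V ρ hρ W hVW hWnorm μ hμ Q hQ B hB
end
end
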